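/- arXiv:1707.00178 — 3 statements merged into one kernel-verified Lean document; each statement's English description precedes it below -/
import Mathlib

section
/- Let H ∈ ℝ^{m×p}, V ∈ ℝ^{n×p}, K ∈ ℝ^{m×n} and K₀ ∈ ℝ^m. Then sup_{P ∈ 𝒫^p} ‖HP − (KVP + K₀)‖_∞ = max_{i,j} |(H − (KV + K₀𝟏ᵀ))_{ij}|, where 𝟏 ∈ ℝ^p is the all-ones vector. -/
open Matrix BigOperators

/-- A probability vector: nonnegative entries summing to 1. -/
def IsProbVec {p : ℕ} (P : Fin p → ℝ) : Prop :=
  (∀ j, 0 ≤ P j) ∧ ∑ j, P j = 1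

/-- The ℓ∞ norm of a vector: max of absolute values of the entries. -/
noncomputable def linfty {m : ℕ} (x : Fin m → ℝ) : ℝ := ⨆ i, |x i|

/-- for H ∈ ℝ^{m×p}, V ∈ ℝ^{n×p}, K ∈ ℝ^{m×n}, K₀ ∈ ℝ^m,
    sup_{P ∈ 𝒫^p} ‖HP − (KVP + K₀)‖_∞ = max_{i,j} |(H − (KV + K₀𝟏ᵀ))_{ij}|. -/
theorem sup_prob_affine_error_eq_max_entry
    {m n p : ℕ} (hm : 0 < m) (hp : 0 < p)
    (H : Matrix (Fin m) (Fin p) ℝ) (V : Matrix (Fin n) (Fin p) ℝ)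
    (K : Matrix (Fin m) (Fin n) ℝ) (K0 : Fin m → ℝ) :
    sSup {a : ℝ | ∃ P : Fin p → ℝ, IsProbVec P ∧
        a = linfty (H.mulVec P - (K.mulVec (V.mulVec P) + K0))} =
      ⨆ i, ⨆ j, |(H - (K * V + Matrix.of fun i (_ : Fin p) => K0 i)) i j| := by
  haveI : Nonempty (Fin m) := ⟨⟨0, hm⟩⟩
  haveI : Nonempty (Fin p) := ⟨⟨0, hp⟩⟩
  set M : Matrix (Fin m) (Fin p) ℝ :=
    H - (K * V + Matrix.of fun i (_ : Fin p) => K0 i) with hM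
  set T : ℝ := ⨆ i, ⨆ j, |M i j| with hT
  -- boundedness facts
  have bdd1 : ∀ i : Fin m, BddAbove (Set.range fun j : Fin p => |M i j|) :=
    fun i => (Set.finite_range _).bddAbove
  have bdd2 : BddAbove (Set.range fun i : Fin m => ⨆ j, |M i j|) :=
    (Set.finite_range _).bddAbove
  have hMT : ∀ i j, |M i j| ≤ T := by
    intro i j
    exact le_trans (le_ciSup (bdd1 i) j) (le_ciSup bdd2 i)
  -- key rewrite
  have key : ∀ P : Fin p → ℝ, IsProbVec P →
      (H.mulVec P - (K.mulVec (V.mulVec P) + K0)) = M.mulVec P := by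
    intro P hP
    funext i
    have h1 : K.mulVec (V.mulVec P) = (K * V).mulVec P := mulVec_mulVec P K V
    have h2 : K0 i = K0 i * ∑ j, P j := by rw [hP.2, mul_one]
    simp only [hM, Pi.sub_apply, Pi.add_apply, h1, mulVec, dotProduct,
      Matrix.sub_apply, Matrix.add_apply, Matrix.of_apply, sub_mul, add_mul,
      Finset.sum_sub_distrib, Finset.sum_add_distrib]
    rw [← Finset.mul_sum, hP.2, mul_one]
  -- upper bound on each element
  have elem_le : ∀ P : Fin p → ℝ, IsProbVec P → linfty (M.mulVec P) ≤ T := by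
    intro P hP
    apply ciSup_le
    intro i
    have : |M.mulVec P i| ≤ T := by
      calc |∑ j, M i j * P j| ≤ ∑ j, |M i j * P j| := Finset.abs_sum_le_sum_abs _ _
        _ = ∑ j, |M i j| * P j := by
            refine Finset.sum_congr rfl fun j _ => ?_
            rw [abs_mul, abs_of_nonneg (hP.1 j)]
        _ ≤ ∑ j, T * P j := by
            refine Finset.sum_le_sum fun j _ => ?_
            exact mul_le_mul_of_nonneg_right (hMT i j) (hP.1 j)
        _ = T := by rw [← Finset.mul_sum, hP.2, mul_one]
    exact this
  -- the value T is attained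
  obtain ⟨q0, hq0⟩ := Finite.exists_max (fun q : Fin m × Fin p => |M q.1 q.2|)
  have hTle : T ≤ |M q0.1 q0.2| := by
    apply ciSup_le; intro i; apply ciSup_le; intro j; exact hq0 (i, j)
  set P0 : Fin p → ℝ := fun j => if j = q0.2 then 1 else 0 with hP0
  have hP0prob : IsProbVec P0 := by
    constructor
    · intro j; by_cases h : j = q0.2 <;> simp [hP0, h]
    · simp [hP0]
  have hmv : M.mulVec P0 = fun i => M i q0.2 := by
    funext i
    simp [mulVec, dotProduct, hP0, mul_ite]
  have hattain : linfty (M.mulVec P0) = T := by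
    apply le_antisymm (elem_le P0 hP0prob)
    calc T ≤ |M q0.1 q0.2| := hTle
      _ ≤ ⨆ i, |M.mulVec P0 i| := by
          rw [hmv]
          exact le_ciSup (f := fun i => |M i q0.2|) ((Set.finite_range _).bddAbove) q0.1
      _ = linfty (M.mulVec P0) := rfl
  have hmem : T ∈ {a : ℝ | ∃ P : Fin p → ℝ, IsProbVec P ∧
      a = linfty (H.mulVec P - (K.mulVec (V.mulVec P) + K0))} :=
    ⟨P0, hP0prob, by rw [key P0 hP0prob, hattain]⟩
  apply le_antisymm
  · apply csSup_le ⟨T, hmem⟩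
    rintro a ⟨P, hP, rfl⟩
    rw [key P hP]
    exact elem_le P hP
  · apply le_csSup _ hmem
    refine ⟨T, ?_⟩
    rintro a ⟨P, hP, rfl⟩
    rw [key P hP]
    exact elem_le P hP
end

section
/- Let H ∈ ℝ^{m×p} and V ∈ ℝ^{n×p}. Then the optimal worst-case error achievable by affine moment closure functions satisfies the duality formula inf_{K ∈ ℝ^{m×n}, K₀ ∈ ℝ^m} max_{i,j} |(H − (KV + K₀𝟏ᵀ))_{ij}| = sup { (Hf)_i : i ∈ {1,…,m}, f ∈ ℝ^p, Vf = 0, 𝟏ᵀf = 0, ‖f‖_{ℓ1} ≤ 1 }. -/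
/-!
Row `i` of `H - (K V + K₀ 𝟏ᵀ)` is `H i` minus an arbitrary element of the subspace `W` spanned by
the rows of `V` and by `𝟏`, and the rows can be chosen independently; so the optimal error is the
largest sup-norm distance from a row of `H` to `W`. The constraints on `f` say exactly that `f`
annihilates `W`, and since the dual of the sup norm is the `ℓ¹` norm, Hahn–Banach on `ℝᵖ ⧸ W`
identifies that distance with `max {H i ⬝ᵥ f : f ⊥ W, ‖f‖₁ ≤ 1}`.
-/

open Matrix BigOperators

open Metric

section SupNormDuality

variable {ι : Type*} [Fintype ι]

lemma iSup_abs_eq_norm (x : ι → ℝ) : ⨆ j, |x j| = ‖x‖ := by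
  refine le_antisymm (Real.iSup_le (fun j => ?_) (norm_nonneg x))
    ((pi_norm_le_iff_of_nonneg (Real.iSup_nonneg fun j => abs_nonneg (x j))).mpr fun j => ?_)
  · simpa only [Real.norm_eq_abs] using norm_le_pi_norm x j
  · exact (Real.norm_eq_abs _).trans_le (le_ciSup (Finite.bddAbove_range fun j => |x j|) j)

lemma dotProduct_le_norm_mul_sum_abs (x f : ι → ℝ) : x ⬝ᵥ f ≤ ‖x‖ * ∑ j, |f j| := by
  rw [Finset.mul_sum]
  refine Finset.sum_le_sum fun j _ => ?_
  calc x j * f j ≤ |x j| * |f j| := by rw [← abs_mul]; exact le_abs_self _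
    _ ≤ ‖x‖ * |f j| := by
      gcongr
      simpa only [Real.norm_eq_abs] using norm_le_pi_norm x j

lemma sum_abs_le_one_of_abs_dotProduct_le_norm (f : ι → ℝ) (h : ∀ x, |x ⬝ᵥ f| ≤ ‖x‖) :
    ∑ j, |f j| ≤ 1 := by
  set s : ι → ℝ := fun j => SignType.sign (f j)
  have hs : ‖s‖ ≤ 1 := (pi_norm_le_iff_of_nonneg zero_le_one).mpr fun j => by
    rw [Real.norm_eq_abs]; simp only [s]; cases SignType.sign (f j) <;> simp
  calc ∑ j, |f j| = s ⬝ᵥ f := by simp only [dotProduct, s, sign_mul_self]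
    _ ≤ |s ⬝ᵥ f| := le_abs_self _
    _ ≤ 1 := (h s).trans hs

end SupNormDuality

section DistanceToSubspace

variable {ι : Type*} [Fintype ι] (W : Submodule ℝ (ι → ℝ)) (x : ι → ℝ)

lemma dotProduct_le_infDist {f : ι → ℝ} (hfW : ∀ w ∈ W, w ⬝ᵥ f = 0) (hf : ∑ j, |f j| ≤ 1) :
    x ⬝ᵥ f ≤ infDist x W := by
  refine (le_infDist ⟨0, W.zero_mem⟩).2 fun w hw => ?_
  calc x ⬝ᵥ f = (x - w) ⬝ᵥ f := by rw [sub_dotProduct, hfW w hw, sub_zero]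
    _ ≤ ‖x - w‖ * ∑ j, |f j| := dotProduct_le_norm_mul_sum_abs _ _
    _ ≤ dist x w := by rw [dist_eq_norm]; exact mul_le_of_le_one_right (norm_nonneg _) hf

lemma exists_dotProduct_eq_infDist :
    ∃ f : ι → ℝ, (∀ w ∈ W, w ⬝ᵥ f = 0) ∧ ∑ j, |f j| ≤ 1 ∧ x ⬝ᵥ f = infDist x W := by
  classical
  have : IsClosed (W : Set (ι → ℝ)) := Submodule.closed_of_finiteDimensional W
  obtain ⟨g, hg, hgx⟩ := exists_dual_vector'' ℝ (W.mkQ x)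
  set ψ := g.toLinearMap ∘ₗ W.mkQ
  set f : ι → ℝ := fun j => ψ fun k => if j = k then 1 else 0
  have hψ : ∀ y, ψ y = y ⬝ᵥ f := fun y => by
    simp only [LinearMap.pi_apply_eq_sum_univ ψ y, dotProduct, f, smul_eq_mul]
  refine ⟨f, fun w hw => ?_, sum_abs_le_one_of_abs_dotProduct_le_norm f fun y => ?_, ?_⟩
  · rw [← hψ]; simp [ψ, (Submodule.Quotient.mk_eq_zero W).mpr hw]
  · rw [← hψ]
    calc |ψ y| ≤ ‖g‖ * ‖W.mkQ y‖ := g.le_opNorm _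
      _ ≤ 1 * ‖y‖ := by gcongr; exact Submodule.Quotient.norm_mk_le W y
      _ = ‖y‖ := one_mul _
  · rw [← hψ]
    exact hgx.trans (QuotientAddGroup.norm_mk (S := W.toAddSubgroup) x)

theorem isGreatest_dotProduct_infDist :
    IsGreatest {a | ∃ f : ι → ℝ, (∀ w ∈ W, w ⬝ᵥ f = 0) ∧ ∑ j, |f j| ≤ 1 ∧ a = x ⬝ᵥ f}
      (infDist x W) := by
  obtain ⟨f, hfW, hf, hxf⟩ := exists_dotProduct_eq_infDist W x
  exact ⟨⟨f, hfW, hf, hxf.symm⟩, fun a ⟨g, hgW, hg, hag⟩ => hag ▸ dotProduct_le_infDist W x hgW hg⟩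

end DistanceToSubspace

section AffineClosure

variable {κ ι : Type*} [Fintype κ] (V : Matrix κ ι ℝ)

noncomputable def affineVecMulLinear : (κ → ℝ) × ℝ →ₗ[ℝ] ι → ℝ :=
  V.vecMulLinear.coprod (LinearMap.toSpanSingleton ℝ _ 1)

lemma affineVecMulLinear_apply (k : κ → ℝ) (c : ℝ) :
    affineVecMulLinear V (k, c) = k ᵥ* V + c • 1 := rfl

lemma affineVecMulLinear_dotProduct [Fintype ι] (k : κ → ℝ) (c : ℝ) (f : ι → ℝ) :
    affineVecMulLinear V (k, c) ⬝ᵥ f = k ⬝ᵥ (V *ᵥ f) + c * ∑ j, f j := by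
  rw [affineVecMulLinear_apply, add_dotProduct, dotProduct_mulVec, smul_dotProduct, one_dotProduct,
    smul_eq_mul]

lemma forall_mem_range_affineVecMulLinear_dotProduct_eq_zero_iff [Fintype ι] (f : ι → ℝ) :
    (∀ w ∈ LinearMap.range (affineVecMulLinear V), w ⬝ᵥ f = 0) ↔ V *ᵥ f = 0 ∧ ∑ j, f j = 0 := by
  classical
  constructor
  · intro h
    have h' (k : κ → ℝ) (c : ℝ) : k ⬝ᵥ (V *ᵥ f) + c * ∑ j, f j = 0 := by
      rw [← affineVecMulLinear_dotProduct]
      exact h _ ⟨(k, c), rfl⟩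
    have hsum : ∑ j, f j = 0 := by simpa using h' 0 1
    exact ⟨funext fun l => by simpa [hsum] using h' (Pi.single l 1) 0, hsum⟩
  · rintro ⟨hV, hsum⟩ _ ⟨⟨k, c⟩, rfl⟩
    rw [affineVecMulLinear_dotProduct, hV, hsum, dotProduct_zero, mul_zero, add_zero]

lemma sub_mul_add_const_apply {μ : Type*} (H : Matrix μ ι ℝ) (K : Matrix μ κ ℝ) (K0 : μ → ℝ)
    (i : μ) :
    (H - (K * V + of fun i (_ : ι) => K0 i)) i = H i - affineVecMulLinear V (K i, K0 i) := by
  ext j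
  simp [affineVecMulLinear_apply, mul_apply, vecMul, dotProduct]

end AffineClosure

lemma iInf_iInf_iSup_iSup_abs_sub_mul_add_const_eq {μ κ ι : Type*} [Finite μ] [Fintype κ]
    [Fintype ι] (H : Matrix μ ι ℝ) (V : Matrix κ ι ℝ) :
    (⨅ K : Matrix μ κ ℝ, ⨅ K0 : μ → ℝ, ⨆ i, ⨆ j, |(H - (K * V + of fun i (_ : ι) => K0 i)) i j|) =
      ⨆ i, infDist (H i) (LinearMap.range (affineVecMulLinear V)) := by
  set W := LinearMap.range (affineVecMulLinear V)
  simp_rw [iSup_abs_eq_norm, sub_mul_add_const_apply, ← dist_eq_norm]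
  refine le_antisymm ?_ ?_
  · have hattained (i : μ) : ∃ c, infDist (H i) W = dist (H i) (affineVecMulLinear V c) := by
      obtain ⟨w, ⟨c, rfl⟩, hw⟩ := (Submodule.closed_of_finiteDimensional W).exists_infDist_eq_dist
        ⟨0, W.zero_mem⟩ (H i)
      exact ⟨c, hw⟩
    choose c hc using hattained
    have hnonneg (K : Matrix μ κ ℝ) (K0 : μ → ℝ) :
        0 ≤ ⨆ i, dist (H i) (affineVecMulLinear V (K i, K0 i)) :=
      Real.iSup_nonneg fun _ => dist_nonneg
    calc _ ≤ ⨅ K0 : μ → ℝ, ⨆ i, dist (H i) (affineVecMulLinear V ((c i).1, K0 i)) :=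
          ciInf_le ⟨0, Set.forall_mem_range.2 fun K => Real.iInf_nonneg (hnonneg K)⟩
            (of fun i => (c i).1)
      _ ≤ ⨆ i, dist (H i) (affineVecMulLinear V ((c i).1, (c i).2)) :=
          ciInf_le ⟨0, Set.forall_mem_range.2 (hnonneg _)⟩ _
      _ = _ := by simp only [hc]
  · exact le_ciInf fun K => le_ciInf fun K0 =>
      ciSup_mono (Finite.bddAbove_range _) fun i => infDist_le_dist_of_mem ⟨_, rfl⟩

lemma isGreatest_iUnion {α ι : Type*} [ConditionallyCompleteLinearOrder α] [Finite ι] [Nonempty ι]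
    {S : ι → Set α} {d : ι → α} (h : ∀ i, IsGreatest (S i) (d i)) :
    IsGreatest (⋃ i, S i) (⨆ i, d i) := by
  obtain ⟨i₀, hi₀⟩ := exists_eq_ciSup_of_finite (f := d)
  refine ⟨Set.mem_iUnion.2 ⟨i₀, hi₀ ▸ (h i₀).1⟩, fun a ha => ?_⟩
  obtain ⟨i, hai⟩ := Set.mem_iUnion.1 ha
  exact ((h i).2 hai).trans (le_ciSup (Finite.bddAbove_range d) i)

theorem optimal_affine_mcf_duality_general
    {m n p : ℕ} (hm : 0 < m)
    (H : Matrix (Fin m) (Fin p) ℝ) (V : Matrix (Fin n) (Fin p) ℝ) :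
    (⨅ K : Matrix (Fin m) (Fin n) ℝ, ⨅ K0 : Fin m → ℝ,
        ⨆ i, ⨆ j, |(H - (K * V + Matrix.of fun i (_ : Fin p) => K0 i)) i j|) =
      sSup {a : ℝ | ∃ i : Fin m, ∃ f : Fin p → ℝ,
        V.mulVec f = 0 ∧ ∑ j, f j = 0 ∧ ∑ j, |f j| ≤ 1 ∧ a = H.mulVec f i} := by
  have : Nonempty (Fin m) := ⟨⟨0, hm⟩⟩
  set W := LinearMap.range (affineVecMulLinear V)
  have hdual : {a : ℝ | ∃ i : Fin m, ∃ f : Fin p → ℝ,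
      V.mulVec f = 0 ∧ ∑ j, f j = 0 ∧ ∑ j, |f j| ≤ 1 ∧ a = H.mulVec f i} =
      ⋃ i, {a | ∃ f : Fin p → ℝ, (∀ w ∈ W, w ⬝ᵥ f = 0) ∧ ∑ j, |f j| ≤ 1 ∧ a = H i ⬝ᵥ f} := by
    ext a
    simp only [Set.mem_ofPred_eq, Set.mem_iUnion, W,
      forall_mem_range_affineVecMulLinear_dotProduct_eq_zero_iff, and_assoc]
    rfl
  rw [iInf_iInf_iSup_iSup_abs_sub_mul_add_const_eq, hdual,
    (isGreatest_iUnion fun i => isGreatest_dotProduct_infDist W (H i)).csSup_eq]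

/-- duality formula for the optimal affine moment closure error:
    inf_{K,K₀} max_{i,j} |(H − (KV + K₀𝟏ᵀ))_{ij}|
      = sup { (Hf)_i : i ∈ {1,…,m}, Vf = 0, 𝟏ᵀf = 0, ‖f‖_{ℓ1} ≤ 1 }. -/
theorem optimal_affine_mcf_duality
    {m n p : ℕ} (hm : 0 < m) (hp : 0 < p)
    (H : Matrix (Fin m) (Fin p) ℝ) (V : Matrix (Fin n) (Fin p) ℝ) :
    (⨅ K : Matrix (Fin m) (Fin n) ℝ, ⨅ K0 : Fin m → ℝ,
        ⨆ i, ⨆ j, |(H - (K * V + Matrix.of fun i (_ : Fin p) => K0 i)) i j|) =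
      sSup {a : ℝ | ∃ i : Fin m, ∃ f : Fin p → ℝ,
        V.mulVec f = 0 ∧ ∑ j, f j = 0 ∧ ∑ j, |f j| ≤ 1 ∧ a = H.mulVec f i} :=
  optimal_affine_mcf_duality_general hm H V
end

section
/- Let H ∈ ℝ^{m×p} and V ∈ ℝ^{n×p} (weak duality). For every K ∈ ℝ^{m×n}, K₀ ∈ ℝ^m, every f ∈ ℝ^p with Vf = 0, 𝟏ᵀf = 0, and ‖f‖_{ℓ1} ≤ 1, and every i ∈ {1,…,m}, one has (Hf)_i ≤ max_{i',j} |(H − (KV + K₀𝟏ᵀ))_{i'j}|. -/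
open Matrix BigOperators

/-- weak duality: for every K, K₀, every f with Vf = 0, 𝟏ᵀf = 0 and
    ‖f‖_{ℓ1} ≤ 1, and every i, one has (Hf)_i ≤ max_{i',j} |(H − (KV + K₀𝟏ᵀ))_{i'j}|. -/
theorem weak_duality_affine_mcf
    {m n p : ℕ}
    (H : Matrix (Fin m) (Fin p) ℝ) (V : Matrix (Fin n) (Fin p) ℝ)
    (K : Matrix (Fin m) (Fin n) ℝ) (K0 : Fin m → ℝ)
    (f : Fin p → ℝ)
    (hf1 : V.mulVec f = 0)
    (hf2 : ∑ j, f j = 0)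
    (hf3 : ∑ j, |f j| ≤ 1)
    (i : Fin m) :
    H.mulVec f i ≤
      ⨆ i', ⨆ j, |(H - (K * V + Matrix.of fun i' (_ : Fin p) => K0 i')) i' j| := by
  set M : Matrix (Fin m) (Fin p) ℝ :=
    H - (K * V + Matrix.of fun i' (_ : Fin p) => K0 i') with hM
  have key : H.mulVec f i = M.mulVec f i := by
    have h1 : (K * V).mulVec f = 0 := by
      rw [← Matrix.mulVec_mulVec, hf1, Matrix.mulVec_zero]
    have h2 : (Matrix.of fun i' (_ : Fin p) => K0 i').mulVec f i = 0 := by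
      simp [Matrix.mulVec, dotProduct, ← Finset.mul_sum, hf2]
    simp [hM, Matrix.sub_mulVec, Matrix.add_mulVec, h1, h2, Pi.sub_apply,
      Pi.add_apply]
  rw [key]
  rcases Nat.eq_zero_or_pos p with hp | hp
  · subst hp
    have h0 : ∀ i' : Fin m, (⨆ j : Fin 0, |M i' j|) = 0 := by
      intro i'
      rw [iSup, Set.range_eq_empty, Real.sSup_empty]
    simp [Matrix.mulVec, dotProduct, h0]
  · haveI : Nonempty (Fin p) := ⟨⟨0, hp⟩⟩
    set C : ℝ := ⨆ i', ⨆ j, |M i' j| with hC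
    have hle : ∀ i' j, |M i' j| ≤ C := by
      intro i' j
      have h1 : |M i' j| ≤ ⨆ j, |M i' j| :=
        le_ciSup (f := fun j => |M i' j|) (Set.finite_range _).bddAbove j
      exact h1.trans (le_ciSup (f := fun i' => ⨆ j, |M i' j|) (Set.finite_range _).bddAbove i')
    have hC0 : 0 ≤ C := le_trans (abs_nonneg _) (hle i ⟨0, hp⟩)
    calc M.mulVec f i = ∑ j, M i j * f j := rfl
      _ ≤ ∑ j, |M i j * f j| := Finset.sum_le_sum fun j _ => le_abs_self _
      _ = ∑ j, |M i j| * |f j| := by simp [abs_mul]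
      _ ≤ ∑ j, C * |f j| := Finset.sum_le_sum fun j _ =>
          mul_le_mul_of_nonneg_right (hle i j) (abs_nonneg _)
      _ = C * ∑ j, |f j| := by rw [Finset.mul_sum]
      _ ≤ C * 1 := mul_le_mul_of_nonneg_left hf3 hC0
      _ = C := mul_one C
end
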